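/- Let C : [0,1] → ℝ be continuously differentiable, let l ∈ (0, 1/4), r = 1 − 2l, c = l·r², and let λ and M be as defined. Suppose f, g, h : [0,1] → ℝ satisfy f(x) + g(y) + h(z) ≤ C(x·y·z) for all (x,y,z) ∈ [0,1]³, with equality for all (x,y,z) ∈ M. Then f, g, h are differentiable on [0,1] with continuous derivatives, and f'(x) = λ(x)·C'(x·λ(x)), g'(y) = λ(y)·C'(y·λ(y)), h'(z) = λ(z)·C'(z·λ(z)) for all x, y, z ∈ [0,1]. -/

import Mathlib

/-!
For every `a ∈ [0,1]` there are `y, z ∈ [0,1]` with `y z = λ(a)` and `(a, y, z) ∈ M`; comparing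
the equality at this point with the inequality at `(b, y, z)` gives
`f b - f a ≤ C(b λ(a)) - C(a λ(a))`, and likewise for `g` and `h` since `M` is symmetric.
Used at `(x, b)` and at `(b, x)`, this squeezes the difference quotient of `f` at `x` between
those of `t ↦ C(t λ(x))` and `t ↦ C(t λ(b))`. Both tend to `λ(x) C'(x λ(x))`, the second by the
mean value inequality, because `λ` is continuous and `(m, t) ↦ m C'(t m)` is jointly continuous.
-/

open Set Filter Topology

/-- The piecewise function `λ`: `(1−2x)²` on `[0, l)`, `c/x` on `[l, r)` and `x(1−x)/2` on
`[r, 1]`, where `r = 1 − 2l` and `c = l·r²`. -/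
noncomputable def lam (l : ℝ) (x : ℝ) : ℝ :=
  if x < l then (1 - 2*x)^2
  else if x < 1 - 2*l then (l * (1 - 2*l)^2) / x
  else x * (1 - x) / 2

/-- The set `M ⊆ [0,1]³`: the union of the three segments
`Mx = {(t, 1−2t, 1−2t) : 0 ≤ t ≤ l}`, `My = {(1−2t, t, 1−2t) : 0 ≤ t ≤ l}`,
`Mz = {(1−2t, 1−2t, t) : 0 ≤ t ≤ l}` and the two-dimensional piece
`M₂ = {(x,y,z) : l ≤ x,y,z ≤ 1−2l, xyz = l(1−2l)²}`. -/
def Mset (l : ℝ) : Set (ℝ × ℝ × ℝ) :=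
  {p | ∃ t, 0 ≤ t ∧ t ≤ l ∧
    (p = (t, 1 - 2*t, 1 - 2*t) ∨ p = (1 - 2*t, t, 1 - 2*t) ∨ p = (1 - 2*t, 1 - 2*t, t))} ∪
  {p | l ≤ p.1 ∧ p.1 ≤ 1 - 2*l ∧ l ≤ p.2.1 ∧ p.2.1 ≤ 1 - 2*l ∧ l ≤ p.2.2 ∧ p.2.2 ≤ 1 - 2*l ∧
    p.1 * p.2.1 * p.2.2 = l * (1 - 2*l)^2}

section Envelope

variable {s : Set ℝ} {F F' : ℝ → ℝ → ℝ} {u : ℝ → ℝ} {x : ℝ}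

lemma tendsto_slope_diag_of_continuousWithinAt (hs : Convex ℝ s)
    (hF : ∀ a ∈ s, ∀ t ∈ s, HasDerivWithinAt (F a) (F' a t) s t)
    (hF' : ContinuousWithinAt (Function.uncurry F') (s ×ˢ s) (x, x)) (hx : x ∈ s) :
    Tendsto (fun b => slope (F b) x b) (𝓝[s \ {x}] x) (𝓝 (F' x x)) := by
  rw [Metric.tendsto_nhdsWithin_nhds]
  intro ε hε
  obtain ⟨δ, hδ, hF'δ⟩ := Metric.continuousWithinAt_iff.1 hF' (ε / 2) (half_pos hε)
  refine ⟨δ, hδ, fun b ⟨hb, hbx⟩ hbδ => ?_⟩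
  have hbx : b - x ≠ 0 := sub_ne_zero.2 hbx
  -- mean value inequality for `F b t - F' x x * t` on `s ∩ ball x δ`
  have hmvt : ‖(F b b - F' x x * b) - (F b x - F' x x * x)‖ ≤ ε / 2 * ‖b - x‖ := by
    refine Convex.norm_image_sub_le_of_norm_hasDerivWithin_le (f := fun t => F b t - F' x x * t)
      (fun t ht => ((hF b hb t ht.1).mono inter_subset_left).sub
        ((hasDerivWithinAt_id t _).const_mul (F' x x)))
      (fun t ht => ?_) (hs.inter (convex_ball x δ)) ⟨hx, Metric.mem_ball_self hδ⟩ ⟨hb, hbδ⟩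
    simpa [dist_eq_norm] using (hF'δ (x := (b, t)) ⟨hb, ht.1⟩
      (by simpa [Prod.dist_eq] using ⟨hbδ, ht.2⟩)).le
  rw [dist_eq_norm, slope_def_field]
  calc ‖(F b b - F b x) / (b - x) - F' x x‖
      = ‖(F b b - F' x x * b) - (F b x - F' x x * x)‖ / ‖b - x‖ := by
        rw [← norm_div]; congr 1; field_simp; ring
    _ ≤ ε / 2 := by rw [div_le_iff₀ (norm_pos_iff.2 hbx)]; exact hmvt
    _ < ε := half_lt_self hε

lemma slope_mem_uIcc_of_sub_le (hu : ∀ a ∈ s, ∀ b ∈ s, u b - u a ≤ F a b - F a a)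
    (hx : x ∈ s) {b : ℝ} (hb : b ∈ s) :
    slope u x b ∈ uIcc (slope (F b) x b) (slope (F x) x b) := by
  have hxb := hu x hx b hb
  have hbx := hu b hb x hx
  simp only [slope_def_field]
  rcases lt_trichotomy b x with hlt | rfl | hgt
  · refine mem_uIcc.2 (Or.inr ⟨?_, ?_⟩) <;>
      exact div_le_div_of_nonpos_of_le (by linarith) (by linarith)
  · simp
  · refine mem_uIcc.2 (Or.inl ⟨?_, ?_⟩) <;>
      exact div_le_div_of_nonneg_right (by linarith) (by linarith)

theorem hasDerivWithinAt_of_sub_le_sub (hs : Convex ℝ s)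
    (hF : ∀ a ∈ s, ∀ t ∈ s, HasDerivWithinAt (F a) (F' a t) s t)
    (hF' : ContinuousWithinAt (Function.uncurry F') (s ×ˢ s) (x, x))
    (hu : ∀ a ∈ s, ∀ b ∈ s, u b - u a ≤ F a b - F a a) (hx : x ∈ s) :
    HasDerivWithinAt u (F' x x) s x := by
  have hlo := hasDerivWithinAt_iff_tendsto_slope.1 (hF x hx x hx)
  have hhi := tendsto_slope_diag_of_continuousWithinAt hs hF hF' hx
  rw [hasDerivWithinAt_iff_tendsto_slope]
  have hmem : ∀ᶠ b in 𝓝[s \ {x}] x, slope u x b ∈ uIcc (slope (F b) x b) (slope (F x) x b) :=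
    eventually_mem_nhdsWithin.mono fun b hb => slope_mem_uIcc_of_sub_le hu hx hb.1
  exact tendsto_of_tendsto_of_tendsto_of_le_of_le' (by simpa using hhi.min hlo)
    (by simpa using hhi.max hlo) (hmem.mono fun _ h => h.1) (hmem.mono fun _ h => h.2)

end Envelope

section CompMul

variable {C C' μ u : ℝ → ℝ}

lemma hasDerivWithinAt_comp_mul_const
    (hC : ∀ t ∈ Icc (0 : ℝ) 1, HasDerivWithinAt C (C' t) (Icc (0 : ℝ) 1) t)
    {m t : ℝ} (hm : m ∈ Icc (0 : ℝ) 1) (ht : t ∈ Icc (0 : ℝ) 1) :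
    HasDerivWithinAt (fun s => C (s * m)) (m * C' (t * m)) (Icc (0 : ℝ) 1) t := by
  have := (hC (t * m) (unitInterval.mul_mem ht hm)).comp t
    ((hasDerivWithinAt_id t (Icc (0 : ℝ) 1)).mul_const m) fun s hs => unitInterval.mul_mem hs hm
  simpa [Function.comp_def, mul_comm] using this

lemma continuousOn_mul_comp_mul (hC' : ContinuousOn C' (Icc (0 : ℝ) 1))
    (hμ : ContinuousOn μ (Icc (0 : ℝ) 1)) (hμI : MapsTo μ (Icc (0 : ℝ) 1) (Icc (0 : ℝ) 1)) :
    ContinuousOn (fun p : ℝ × ℝ => μ p.1 * C' (p.2 * μ p.1)) (Icc (0 : ℝ) 1 ×ˢ Icc (0 : ℝ) 1) := by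
  have hμ₁ : ContinuousOn (fun p : ℝ × ℝ => μ p.1) (Icc (0 : ℝ) 1 ×ˢ Icc (0 : ℝ) 1) :=
    hμ.comp continuous_fst.continuousOn fun p hp => hp.1
  exact hμ₁.mul (hC'.comp (continuous_snd.continuousOn.mul hμ₁)
    fun p hp => unitInterval.mul_mem hp.2 (hμI hp.1))

theorem hasDerivWithinAt_of_sub_le_comp_mul
    (hC : ∀ t ∈ Icc (0 : ℝ) 1, HasDerivWithinAt C (C' t) (Icc (0 : ℝ) 1) t)
    (hC' : ContinuousOn C' (Icc (0 : ℝ) 1))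
    (hμ : ContinuousOn μ (Icc (0 : ℝ) 1)) (hμI : MapsTo μ (Icc (0 : ℝ) 1) (Icc (0 : ℝ) 1))
    (hu : ∀ a ∈ Icc (0 : ℝ) 1, ∀ b ∈ Icc (0 : ℝ) 1, u b - u a ≤ C (b * μ a) - C (a * μ a))
    {x : ℝ} (hx : x ∈ Icc (0 : ℝ) 1) :
    HasDerivWithinAt u (μ x * C' (x * μ x)) (Icc (0 : ℝ) 1) x :=
  hasDerivWithinAt_of_sub_le_sub (F := fun a t => C (t * μ a)) (F' := fun a t => μ a * C' (t * μ a))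
    (convex_Icc 0 1) (fun _ ha _ ht => hasDerivWithinAt_comp_mul_const hC (hμI ha) ht)
    (continuousOn_mul_comp_mul hC' hμ hμI (x, x) ⟨hx, hx⟩) hu hx

end CompMul

section Lam

variable {l x : ℝ}

lemma lam_eq_left (hl : l ∈ Ioo (0 : ℝ) (1/4)) (hx : x ≤ l) : lam l x = (1 - 2*x)^2 := by
  obtain ⟨hl0, hl4⟩ := hl
  unfold lam
  split_ifs with h1 h2
  · rfl
  · obtain rfl : x = l := le_antisymm hx (not_lt.1 h1)
    field_simp
  · exact absurd (hx.trans_lt (by linarith)) h2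

lemma lam_eq_mid (hl : l ∈ Ioo (0 : ℝ) (1/4)) (hx : x ∈ Icc l (1 - 2*l)) :
    lam l x = l * (1 - 2*l)^2 / x := by
  obtain ⟨hl0, hl4⟩ := hl
  unfold lam
  split_ifs with h1 h2
  · exact absurd hx.1 (not_le.2 h1)
  · rfl
  · obtain rfl : x = 1 - 2*l := le_antisymm hx.2 (not_lt.1 h2)
    have : (1 : ℝ) - 2*l ≠ 0 := by linarith
    field_simp
    ring

lemma lam_eq_right (hl : l ∈ Ioo (0 : ℝ) (1/4)) (hx : 1 - 2*l ≤ x) :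
    lam l x = x * (1 - x) / 2 := by
  unfold lam
  rw [if_neg (by linarith [hl.2]), if_neg hx.not_gt]

lemma continuousOn_lam (hl : l ∈ Ioo (0 : ℝ) (1/4)) : ContinuousOn (lam l) (Icc (0 : ℝ) 1) := by
  obtain ⟨hl0, hl4⟩ := hl
  have h₁ : ContinuousOn (lam l) (Icc 0 l) :=
    (continuous_const.sub (continuous_const.mul continuous_id)).pow 2 |>.continuousOn.congr
      fun x hx => lam_eq_left ⟨hl0, hl4⟩ hx.2
  have h₂ : ContinuousOn (lam l) (Icc l (1 - 2*l)) :=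
    (continuousOn_const.div continuousOn_id fun x hx => (hl0.trans_le hx.1).ne').congr
      fun x hx => lam_eq_mid ⟨hl0, hl4⟩ hx
  have h₃ : ContinuousOn (lam l) (Icc (1 - 2*l) 1) :=
    (continuous_id.mul (continuous_const.sub continuous_id)).div_const 2 |>.continuousOn.congr
      fun x hx => lam_eq_right ⟨hl0, hl4⟩ hx.1
  rw [← Icc_union_Icc_eq_Icc (by linarith : (0 : ℝ) ≤ 1 - 2*l) (by linarith),
    ← Icc_union_Icc_eq_Icc hl0.le (by linarith)]
  exact (h₁.union_of_isClosed h₂ isClosed_Icc isClosed_Icc).union_of_isClosed h₃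
    (isClosed_Icc.union isClosed_Icc) isClosed_Icc

end Lam

section Mset

variable {l x y z : ℝ}

lemma swap12_mem_Mset (hp : (x, y, z) ∈ Mset l) : (y, x, z) ∈ Mset l := by
  simp only [Mset, mem_union, mem_ofPred_eq, Prod.mk.injEq] at hp ⊢
  rcases hp with ⟨t, ht0, htl, ⟨rfl, rfl, rfl⟩ | ⟨rfl, rfl, rfl⟩ | ⟨rfl, rfl, rfl⟩⟩ |
    ⟨hx, hx', hy, hy', hz, hz', hprod⟩
  · exact Or.inl ⟨_, ht0, htl, by simp⟩
  · exact Or.inl ⟨_, ht0, htl, by simp⟩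
  · exact Or.inl ⟨_, ht0, htl, by simp⟩
  · exact Or.inr ⟨hy, hy', hx, hx', hz, hz', by rw [← hprod]; ring⟩

lemma swap13_mem_Mset (hp : (x, y, z) ∈ Mset l) : (z, y, x) ∈ Mset l := by
  simp only [Mset, mem_union, mem_ofPred_eq, Prod.mk.injEq] at hp ⊢
  rcases hp with ⟨t, ht0, htl, ⟨rfl, rfl, rfl⟩ | ⟨rfl, rfl, rfl⟩ | ⟨rfl, rfl, rfl⟩⟩ |
    ⟨hx, hx', hy, hy', hz, hz', hprod⟩
  · exact Or.inl ⟨_, ht0, htl, by simp⟩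
  · exact Or.inl ⟨_, ht0, htl, by simp⟩
  · exact Or.inl ⟨_, ht0, htl, by simp⟩
  · exact Or.inr ⟨hz, hz', hy, hy', hx, hx', by rw [← hprod]; ring⟩

lemma exists_mem_Mset_mul_eq_lam (hl : l ∈ Ioo (0 : ℝ) (1/4)) (hx : x ∈ Icc (0 : ℝ) 1) :
    ∃ y ∈ Icc (0 : ℝ) 1, ∃ z ∈ Icc (0 : ℝ) 1, y * z = lam l x ∧ (x, y, z) ∈ Mset l := by
  obtain ⟨hl0, hl4⟩ := hl
  obtain ⟨hx0, hx1⟩ := hx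
  rcases lt_or_ge x l with hxl | hlx
  · refine ⟨1 - 2*x, ⟨by linarith, by linarith⟩, 1 - 2*x, ⟨by linarith, by linarith⟩, ?_,
      Or.inl ⟨x, hx0, hxl.le, Or.inl rfl⟩⟩
    rw [lam_eq_left ⟨hl0, hl4⟩ hxl.le]; ring
  rcases lt_or_ge x (1 - 2*l) with hxr | hrx
  · have hxpos : 0 < x := hl0.trans_le hlx
    refine ⟨1 - 2*l, ⟨by linarith, by linarith⟩, l * (1 - 2*l) / x, ⟨?_, ?_⟩, ?_,
      Or.inr ⟨hlx, hxr.le, by linarith, le_rfl, ?_, ?_, ?_⟩⟩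
    · have : 0 ≤ 1 - 2*l := by linarith
      positivity
    · rw [div_le_one hxpos]; nlinarith
    · rw [lam_eq_mid ⟨hl0, hl4⟩ ⟨hlx, hxr.le⟩]; ring
    · rw [le_div_iff₀ hxpos]; nlinarith
    · rw [div_le_iff₀ hxpos]; nlinarith
    · dsimp only; field_simp
  · refine ⟨x, ⟨hx0, hx1⟩, (1 - x) / 2, ⟨by linarith, by linarith⟩, ?_,
      Or.inl ⟨(1 - x) / 2, by linarith, by linarith, Or.inr (Or.inr ?_)⟩⟩
    · rw [lam_eq_right ⟨hl0, hl4⟩ hrx]; ring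
    · ext <;> simp only <;> ring

lemma lam_mem_Icc (hl : l ∈ Ioo (0 : ℝ) (1/4)) (hx : x ∈ Icc (0 : ℝ) 1) :
    lam l x ∈ Icc (0 : ℝ) 1 := by
  obtain ⟨y, hy, z, hz, hyz, -⟩ := exists_mem_Mset_mul_eq_lam hl hx
  exact hyz ▸ unitInterval.mul_mem hy hz

end Mset

section Potentials

variable {C f g h : ℝ → ℝ} {l a b : ℝ}

lemma fst_sub_le_of_touching (hl : l ∈ Ioo (0 : ℝ) (1/4))
    (hle : ∀ x ∈ Icc (0 : ℝ) 1, ∀ y ∈ Icc (0 : ℝ) 1, ∀ z ∈ Icc (0 : ℝ) 1,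
      f x + g y + h z ≤ C (x * y * z))
    (heq : ∀ p ∈ Mset l, f p.1 + g p.2.1 + h p.2.2 = C (p.1 * p.2.1 * p.2.2))
    (ha : a ∈ Icc (0 : ℝ) 1) (hb : b ∈ Icc (0 : ℝ) 1) :
    f b - f a ≤ C (b * lam l a) - C (a * lam l a) := by
  obtain ⟨y, hy, z, hz, hyz, hM⟩ := exists_mem_Mset_mul_eq_lam hl ha
  have h_eq := heq _ hM
  have h_le := hle b hb y hy z hz
  dsimp only at h_eq
  rw [mul_assoc, hyz] at h_eq h_le
  linarith

lemma snd_sub_le_of_touching (hl : l ∈ Ioo (0 : ℝ) (1/4))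
    (hle : ∀ x ∈ Icc (0 : ℝ) 1, ∀ y ∈ Icc (0 : ℝ) 1, ∀ z ∈ Icc (0 : ℝ) 1,
      f x + g y + h z ≤ C (x * y * z))
    (heq : ∀ p ∈ Mset l, f p.1 + g p.2.1 + h p.2.2 = C (p.1 * p.2.1 * p.2.2))
    (ha : a ∈ Icc (0 : ℝ) 1) (hb : b ∈ Icc (0 : ℝ) 1) :
    g b - g a ≤ C (b * lam l a) - C (a * lam l a) := by
  refine fst_sub_le_of_touching (g := f) (h := h) hl (fun x hx y hy z hz => ?_)
    (fun ⟨x, y, z⟩ hp => ?_) ha hb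
  · simpa only [add_comm (f y), mul_comm y] using hle y hy x hx z hz
  · simpa only [add_comm (f y), mul_comm y] using heq _ (swap12_mem_Mset hp)

lemma thd_sub_le_of_touching (hl : l ∈ Ioo (0 : ℝ) (1/4))
    (hle : ∀ x ∈ Icc (0 : ℝ) 1, ∀ y ∈ Icc (0 : ℝ) 1, ∀ z ∈ Icc (0 : ℝ) 1,
      f x + g y + h z ≤ C (x * y * z))
    (heq : ∀ p ∈ Mset l, f p.1 + g p.2.1 + h p.2.2 = C (p.1 * p.2.1 * p.2.2))
    (ha : a ∈ Icc (0 : ℝ) 1) (hb : b ∈ Icc (0 : ℝ) 1) :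
    h b - h a ≤ C (b * lam l a) - C (a * lam l a) := by
  refine fst_sub_le_of_touching (g := g) (h := f) hl (fun x hx y hy z hz => ?_)
    (fun ⟨x, y, z⟩ hp => ?_) ha hb
  · convert hle z hz y hy x hx using 1 <;> ring_nf
  · convert heq _ (swap13_mem_Mset hp) using 1 <;> ring_nf

end Potentials

theorem dual_potentials_differentiable (C C' : ℝ → ℝ)
    (hC : ∀ t ∈ Set.Icc (0 : ℝ) 1, HasDerivWithinAt C (C' t) (Set.Icc (0 : ℝ) 1) t)
    (hC' : ContinuousOn C' (Set.Icc (0 : ℝ) 1))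
    (l : ℝ) (hl : l ∈ Set.Ioo (0 : ℝ) (1/4))
    (f g h : ℝ → ℝ)
    (hle : ∀ x ∈ Set.Icc (0 : ℝ) 1, ∀ y ∈ Set.Icc (0 : ℝ) 1, ∀ z ∈ Set.Icc (0 : ℝ) 1,
      f x + g y + h z ≤ C (x * y * z))
    (heq : ∀ p ∈ Mset l, f p.1 + g p.2.1 + h p.2.2 = C (p.1 * p.2.1 * p.2.2)) :
    (∀ x ∈ Set.Icc (0 : ℝ) 1,
        HasDerivWithinAt f (lam l x * C' (x * lam l x)) (Set.Icc (0 : ℝ) 1) x ∧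
        HasDerivWithinAt g (lam l x * C' (x * lam l x)) (Set.Icc (0 : ℝ) 1) x ∧
        HasDerivWithinAt h (lam l x * C' (x * lam l x)) (Set.Icc (0 : ℝ) 1) x) ∧
      ContinuousOn (fun x => lam l x * C' (x * lam l x)) (Set.Icc (0 : ℝ) 1) := by
  have hlam := continuousOn_lam hl
  have hlamI : MapsTo (lam l) (Icc (0 : ℝ) 1) (Icc (0 : ℝ) 1) := fun _ hx => lam_mem_Icc hl hx
  refine ⟨fun x hx => ⟨?_, ?_, ?_⟩, ?_⟩
  · exact hasDerivWithinAt_of_sub_le_comp_mul hC hC' hlam hlamI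
      (fun _ ha _ hb => fst_sub_le_of_touching hl hle heq ha hb) hx
  · exact hasDerivWithinAt_of_sub_le_comp_mul hC hC' hlam hlamI
      (fun _ ha _ hb => snd_sub_le_of_touching hl hle heq ha hb) hx
  · exact hasDerivWithinAt_of_sub_le_comp_mul hC hC' hlam hlamI
      (fun _ ha _ hb => thd_sub_le_of_touching hl hle heq ha hb) hx
  · exact (continuousOn_mul_comp_mul hC' hlam hlamI).comp (continuousOn_id.prodMk continuousOn_id)
      fun x hx => ⟨hx, hx⟩
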